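/- Let F be a field of characteristic different from 2 and Q a quaternion F-algebra. If p is an invertible pure quaternion, then Q is isomorphic to (p², d)_F for some d ∈ F^×; explicitly, choosing an invertible pure quaternion q anticommuting with p, one has Q ≅ (p², q²)_F. -/

import Mathlib

/-!
If `p² = α` and `q² = d` are nonzero scalars and `pq = -qp`, then `p, q, pq` is a quaternion
basis, so it defines an algebra map `ℍ[F, α, d] → Q`. The map is injective: for `x, y`
commuting with `p`, adding `x + yq` to its conjugate by `p` leaves `2x`, so `x + yq = 0` forces
`x = 0`; since both algebras have dimension `4`, it is an isomorphism. An anticommuting pure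
quaternion `q` is found among the commutators of `p` with `i`, `j`, `k`, whose squares cannot
all vanish unless `p = 0`.
-/

open Quaternion

section Anticommuting

variable {F A : Type*} [Field F] [Ring A] [Algebra F A]

lemma isUnit_of_mul_self_eq_algebraMap {d : F} (hd : d ≠ 0) {q : A}
    (hq : q * q = algebraMap F A d) : IsUnit q :=
  ((Commute.refl q).isUnit_mul_iff.mp (hq ▸ (IsUnit.mk0 d hd).map _)).1

lemma eq_zero_of_add_mul_eq_zero_of_anticommute (h2 : (2 : F) ≠ 0) {p q x y : A}
    (hp : IsUnit p) (hpq : p * q = -(q * p)) (hx : Commute p x) (hy : Commute p y)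
    (h : x + y * q = 0) : x = 0 := by
  have hxp : (2 : F) • (x * p) = 0 := calc
    (2 : F) • (x * p) = p * (x + y * q) + (x + y * q) * p := by
      rw [mul_add, add_mul, hx.eq, ← mul_assoc p y, hy.eq, mul_assoc y p, hpq, mul_neg,
        ← mul_assoc]
      module
    _ = 0 := by rw [h, mul_zero, zero_mul, add_zero]
  exact hp.mul_left_eq_zero.mp ((smul_eq_zero.mp hxp).resolve_left h2)

variable [Nontrivial A]

lemma eq_zero_of_algebraMap_add_smul_eq_zero (h2 : (2 : F) ≠ 0) {p q : A} {c₀ c₁ : F}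
    (hp : p ≠ 0) (hq : IsUnit q) (hpq : p * q = -(q * p))
    (h : algebraMap F A c₀ + c₁ • p = 0) : c₀ = 0 ∧ c₁ = 0 := by
  have hc₀ : algebraMap F A c₀ = 0 := by
    refine eq_zero_of_add_mul_eq_zero_of_anticommute h2 hq (y := algebraMap F A c₁)
      (by rw [hpq, neg_neg]) (Algebra.commutes _ _).symm (Algebra.commutes _ _).symm ?_
    rwa [← Algebra.smul_def]
  rw [hc₀, zero_add] at h
  exact ⟨(map_eq_zero _).mp hc₀, (smul_eq_zero.mp h).resolve_right hp⟩

end Anticommuting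

namespace QuaternionAlgebra.Basis

variable {F A : Type*} [Field F] [Ring A] [Algebra F A] {c₁ c₃ : F}

def ofAnticommute {p q : A} (hp : p * p = algebraMap F A c₁) (hq : q * q = algebraMap F A c₃)
    (hpq : p * q = -(q * p)) : Basis A c₁ 0 c₃ where
  i := p
  j := q
  k := p * q
  i_mul_i := by rw [hp, zero_smul, add_zero, Algebra.algebraMap_eq_smul_one]
  j_mul_j := by rw [hq, Algebra.algebraMap_eq_smul_one]
  i_mul_j := rfl
  j_mul_i := by rw [hpq, zero_smul, zero_sub, neg_neg]

variable (B : Basis A c₁ 0 c₃)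

lemma i_mul_i_eq_algebraMap : B.i * B.i = algebraMap F A c₁ := by
  rw [B.i_mul_i, zero_smul, add_zero, Algebra.algebraMap_eq_smul_one]

lemma j_mul_j_eq_algebraMap : B.j * B.j = algebraMap F A c₃ := by
  rw [B.j_mul_j, Algebra.algebraMap_eq_smul_one]

lemma i_mul_j_eq_neg : B.i * B.j = -(B.j * B.i) := by
  rw [B.j_mul_i, zero_smul, zero_sub, neg_neg, B.i_mul_j]

lemma liftHom_injective [Nontrivial A] (h2 : (2 : F) ≠ 0) (hc₁ : c₁ ≠ 0) (hc₃ : c₃ ≠ 0) :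
    Function.Injective B.liftHom := by
  have hi := isUnit_of_mul_self_eq_algebraMap hc₁ B.i_mul_i_eq_algebraMap
  have hj := isUnit_of_mul_self_eq_algebraMap hc₃ B.j_mul_j_eq_algebraMap
  rw [injective_iff_map_eq_zero]
  intro w hw
  have hcomm (c c' : F) : Commute B.i (algebraMap F A c + c' • B.i) :=
    (Algebra.commute_algebraMap_right _ _).add_right ((Commute.refl _).smul_right _)
  have hsum : (algebraMap F A w.re + w.imI • B.i) + (algebraMap F A w.imJ + w.imK • B.i) * B.j
      = 0 := by
    rw [← hw]
    simp only [liftHom_apply, lift, add_mul, smul_mul_assoc, ← Algebra.smul_def, B.i_mul_j]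
    abel
  have hs := eq_zero_of_algebraMap_add_smul_eq_zero h2 hi.ne_zero hj B.i_mul_j_eq_neg
    (eq_zero_of_add_mul_eq_zero_of_anticommute h2 hi B.i_mul_j_eq_neg (hcomm _ _) (hcomm _ _)
      hsum)
  rw [hs.1, hs.2, map_zero, zero_smul, zero_add, zero_add, hj.mul_left_eq_zero] at hsum
  have hr := eq_zero_of_algebraMap_add_smul_eq_zero h2 hi.ne_zero hj B.i_mul_j_eq_neg hsum
  ext
  exacts [hs.1, hs.2, hr.1, hr.2]

lemma liftHom_bijective (h2 : (2 : F) ≠ 0) (hc₁ : c₁ ≠ 0) (hc₃ : c₃ ≠ 0)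
    (hA : Module.finrank F A = 4) : Function.Bijective B.liftHom := by
  have : FiniteDimensional F A := Module.finite_of_finrank_eq_succ hA
  have : Nontrivial A := Module.nontrivial_of_finrank_eq_succ hA
  have hinj := B.liftHom_injective h2 hc₁ hc₃
  refine ⟨hinj, (LinearMap.injective_iff_surjective_of_finrank_eq_finrank
    (f := B.liftHom.toLinearMap) ?_).mp hinj⟩
  rw [finrank_eq_four, hA]

end QuaternionAlgebra.Basis

namespace QuaternionAlgebra

variable {F : Type*} [Field F] {a b : F}

lemma mul_self_eq_algebraMap_re {p : ℍ[F, a, b]} (hp : p.re = 0) :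
    p * p = algebraMap F ℍ[F, a, b] (p * p).re := by
  ext <;> simp [hp] <;> ring

lemma exists_re_eq_zero_mul_eq_neg_mul (h2 : (2 : F) ≠ 0) (ha : a ≠ 0) (hb : b ≠ 0)
    {p : ℍ[F, a, b]} (hp : p.re = 0) (hp0 : p ≠ 0) :
    ∃ q : ℍ[F, a, b], q.re = 0 ∧ p * q = -(q * p) ∧ (q * q).re ≠ 0 := by
  by_contra! h
  obtain ⟨_, x, y, z⟩ := p
  subst hp
  -- up to scalars, the commutators of `p` with `k`, `j` and `i`
  have h₁ := h ⟨0, b * y, -(a * x), 0⟩ rfl (by ext <;> simp <;> ring)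
  have h₂ := h ⟨0, b * z, 0, x⟩ rfl (by ext <;> simp <;> ring)
  have h₃ := h ⟨0, 0, a * z, y⟩ rfl (by ext <;> simp <;> ring)
  simp only [re_mul, mul_zero, zero_mul, add_zero, zero_add, sub_zero] at h₁ h₂ h₃
  have hz : z = 0 := by
    have : 2 * a ^ 2 * b ^ 2 * z ^ 2 = 0 := by linear_combination h₁ + a * h₂ + b * h₃
    simpa [h2, ha, hb] using this
  have hx : x = 0 := by
    have : a * b * x ^ 2 = 0 := by linear_combination -h₂ + a * b ^ 2 * z * hz
    simpa [ha, hb] using this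
  have hy : y = 0 := by
    have : a * b ^ 2 * y ^ 2 = 0 := by linear_combination h₁ - b * a ^ 2 * x * hx
    simpa [ha, hb] using this
  subst hx hy hz
  exact hp0 rfl

end QuaternionAlgebra

/-- In a quaternion algebra `Q = (a,b)_F` (`char F ≠ 2`, `a, b ∈ F^×`),
if `p` is an invertible pure quaternion then there is an invertible pure quaternion `q`
anticommuting with `p`, and `Q ≅ (p², q²)_F`, where `p², q²` are nonzero scalars. -/
theorem stmt15 (F : Type*) [Field F] (hchar : ringChar F ≠ 2)
    (a b : F) (ha : a ≠ 0) (hb : b ≠ 0)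
    (p : ℍ[F, a, b]) (hp : p.re = 0) (hpu : IsUnit p) :
    ∃ q : ℍ[F, a, b], q.re = 0 ∧ IsUnit q ∧ p * q = -(q * p) ∧
      ∃ α d : F, α ≠ 0 ∧ d ≠ 0 ∧
        p * p = algebraMap F ℍ[F, a, b] α ∧ q * q = algebraMap F ℍ[F, a, b] d ∧
        Nonempty (ℍ[F, a, b] ≃ₐ[F] ℍ[F, α, d]) := by
  have h2 : (2 : F) ≠ 0 := Ring.two_ne_zero hchar
  obtain ⟨q, hq, hpq, hd⟩ :=
    QuaternionAlgebra.exists_re_eq_zero_mul_eq_neg_mul h2 ha hb hp hpu.ne_zero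
  have hpp := QuaternionAlgebra.mul_self_eq_algebraMap_re hp
  have hqq := QuaternionAlgebra.mul_self_eq_algebraMap_re hq
  have hα : (p * p).re ≠ 0 := fun h ↦ (hpu.mul hpu).ne_zero (by rw [hpp, h, map_zero])
  let B := QuaternionAlgebra.Basis.ofAnticommute hpp hqq hpq
  refine ⟨q, hq, isUnit_of_mul_self_eq_algebraMap hd hqq, hpq, _, _, hα, hd, hpp, hqq,
    ⟨(AlgEquiv.ofBijective B.liftHom ?_).symm⟩⟩
  exact B.liftHom_bijective h2 hα hd (QuaternionAlgebra.finrank_eq_four _ _ _)
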